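/- arXiv:2009.09868 — 2 statements merged into one kernel-verified Lean document; each statement's English description precedes it below -/
import Mathlib

section
/- Let $\gamma > 0$ and $\tau \geq 1$. For every non-negative, non-decreasing function $h : (0,\infty) \to [0,\infty)$, one has $\int_0^\infty \big( \rho^{-\gamma} h(\rho) \big)^\tau \frac{d\rho}{\rho} \leq 2^{(2\gamma+1)\tau} \Big( \int_0^\infty \rho^{-\gamma} h(\rho) \frac{d\rho}{\rho} \Big)^\tau$. -/
/-!
Write `f ρ = ρ^(-γ) h ρ` and `I = ∫ f dρ/ρ`. On `(ρ, 2ρ]` the integrand `f σ / σ` is at least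
`(2ρ)^(-γ) h ρ / (2ρ)`, and the interval has length `ρ`, so `f ρ ≤ 2^(γ+1) I` for every `ρ > 0`.
Hence `∫ f^τ dρ/ρ ≤ (2^(γ+1) I)^(τ-1) I ≤ 2^((γ+1)τ) I^τ`.
-/

open MeasureTheory Set

open scoped ENNReal

theorem rpow_eq_rpow_sub_one_mul {x : ℝ≥0∞} {p : ℝ} (hp : 1 ≤ p) : x ^ p = x ^ (p - 1) * x := by
  conv_lhs => rw [← sub_add_cancel p 1]
  rw [ENNReal.rpow_add_of_nonneg _ _ (sub_nonneg.mpr hp) zero_le_one, ENNReal.rpow_one]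

theorem lintegral_rpow_mul_le_of_ae_le {α : Type*} [MeasurableSpace α] {μ : Measure α}
    {f w : α → ℝ≥0∞} {M : ℝ≥0∞} (hM : M ≠ ⊤) {p : ℝ} (hp : 1 ≤ p) (hf : ∀ᵐ x ∂μ, f x ≤ M) :
    ∫⁻ x, f x ^ p * w x ∂μ ≤ M ^ (p - 1) * ∫⁻ x, f x * w x ∂μ := by
  have hp' : 0 ≤ p - 1 := sub_nonneg.mpr hp
  calc ∫⁻ x, f x ^ p * w x ∂μ ≤ ∫⁻ x, M ^ (p - 1) * (f x * w x) ∂μ := by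
        refine lintegral_mono_ae (hf.mono fun x hx => ?_)
        rw [rpow_eq_rpow_sub_one_mul hp, mul_assoc]
        gcongr
    _ = M ^ (p - 1) * ∫⁻ x, f x * w x ∂μ :=
        lintegral_const_mul' _ _ (ENNReal.rpow_ne_top_of_nonneg hp' hM)

theorem mul_rpow_sub_one_mul_le {C I : ℝ≥0∞} (hC : 1 ≤ C) {p : ℝ} (hp : 1 ≤ p) :
    (C * I) ^ (p - 1) * I ≤ C ^ p * I ^ p := by
  rw [ENNReal.mul_rpow_of_nonneg _ _ (sub_nonneg.mpr hp), mul_assoc, ← rpow_eq_rpow_sub_one_mul hp]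
  gcongr
  linarith

theorem ofReal_rpow_neg_mul_le_lintegral_Ioi {γ : ℝ} (hγ : 0 ≤ γ) {h : ℝ → ℝ}
    (hpos : ∀ ρ ∈ Ioi (0:ℝ), 0 ≤ h ρ) (hmono : MonotoneOn h (Ioi (0:ℝ))) {ρ : ℝ} (hρ : 0 < ρ) :
    ENNReal.ofReal (ρ ^ (-γ) * h ρ)
      ≤ ENNReal.ofReal (2 ^ (γ + 1)) * ∫⁻ σ in Ioi (0:ℝ), ENNReal.ofReal (σ ^ (-γ) * h σ / σ) := by
  have hhρ := hpos ρ hρ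
  set m : ℝ := (2 * ρ) ^ (-γ) * h ρ / (2 * ρ)
  have hIoc : Ioc ρ (2 * ρ) ⊆ Ioi 0 := fun σ hσ => hρ.trans hσ.1
  have hm_le : ∀ σ ∈ Ioc ρ (2 * ρ), ENNReal.ofReal m ≤ ENNReal.ofReal (σ ^ (-γ) * h σ / σ) := by
    intro σ hσ
    have hσ0 : 0 < σ := hρ.trans hσ.1
    have hhσ : h ρ ≤ h σ := hmono hρ hσ0 hσ.1.le
    have hpow : (2 * ρ) ^ (-γ) ≤ σ ^ (-γ) := Real.rpow_le_rpow_of_nonpos hσ0 hσ.2 (by linarith)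
    apply ENNReal.ofReal_le_ofReal
    simp only [m]
    gcongr
    exacts [mul_nonneg (by positivity) (hpos σ hσ0), hσ.2]
  have hm : ρ ^ (-γ) * h ρ = 2 ^ (γ + 1) * (m * ρ) := by
    have h2 : (2:ℝ) ^ (γ + 1) * 2 ^ (-γ) = 2 := by
      rw [← Real.rpow_add two_pos, add_neg_cancel_comm, Real.rpow_one]
    have hhalf : ∀ x : ℝ, x / (2 * ρ) * ρ = x / 2 := fun x => by field_simp
    simp only [m, Real.mul_rpow zero_le_two hρ.le, hhalf]
    linear_combination (-(ρ ^ (-γ) * h ρ) / 2) * h2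
  calc ENNReal.ofReal (ρ ^ (-γ) * h ρ)
      = ENNReal.ofReal (2 ^ (γ + 1)) * (ENNReal.ofReal m * volume (Ioc ρ (2 * ρ))) := by
        rw [Real.volume_Ioc, ← ENNReal.ofReal_mul (by positivity),
          ← ENNReal.ofReal_mul (by positivity), hm]
        ring_nf
    _ ≤ ENNReal.ofReal (2 ^ (γ + 1)) * ∫⁻ σ in Ioc ρ (2 * ρ), ENNReal.ofReal (σ ^ (-γ) * h σ / σ) := by
        rw [← setLIntegral_const]
        gcongr _ * ?_
        exact setLIntegral_mono' measurableSet_Ioc hm_le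
    _ ≤ _ := by gcongr _ * ?_; exact lintegral_mono_set hIoc

theorem ofReal_div_eq_mul_inv {x : ℝ} (hx : 0 ≤ x) (ρ : ℝ) :
    ENNReal.ofReal (x / ρ) = ENNReal.ofReal x * ENNReal.ofReal ρ⁻¹ := by
  rw [div_eq_mul_inv, ENNReal.ofReal_mul hx]

theorem stmt_0 (γ τ : ℝ) (hγ : 0 < γ) (hτ : 1 ≤ τ)
    (h : ℝ → ℝ) (hpos : ∀ ρ ∈ Ioi (0:ℝ), 0 ≤ h ρ)
    (hmono : MonotoneOn h (Ioi (0:ℝ))) :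
    ∫⁻ ρ in Ioi (0:ℝ), ENNReal.ofReal ((ρ ^ (-γ) * h ρ) ^ τ / ρ)
      ≤ ENNReal.ofReal (2 ^ ((2*γ+1)*τ)) *
        (∫⁻ ρ in Ioi (0:ℝ), ENNReal.ofReal (ρ ^ (-γ) * h ρ / ρ)) ^ τ := by
  set I := ∫⁻ ρ in Ioi (0:ℝ), ENNReal.ofReal (ρ ^ (-γ) * h ρ / ρ)
  set C : ℝ≥0∞ := ENNReal.ofReal (2 ^ (γ + 1))
  set F : ℝ → ℝ≥0∞ := fun ρ => ENNReal.ofReal (ρ ^ (-γ) * h ρ)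
  have hτ0 : 0 < τ := by linarith
  have hC : 1 ≤ C := ENNReal.one_le_ofReal.mpr (Real.one_le_rpow one_le_two (by linarith))
  rcases eq_or_ne I ⊤ with hI | hI
  · rw [hI, ENNReal.top_rpow_of_pos hτ0, ENNReal.mul_top (by positivity)]
    exact le_top
  have hF : ∀ ρ ∈ Ioi (0:ℝ), 0 ≤ ρ ^ (-γ) * h ρ := fun ρ hρ =>
    mul_nonneg (Real.rpow_nonneg (le_of_lt hρ) _) (hpos ρ hρ)
  have hFI : ∀ᵐ ρ ∂volume.restrict (Ioi (0:ℝ)), F ρ ≤ C * I :=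
    (ae_restrict_mem measurableSet_Ioi).mono fun ρ hρ =>
      ofReal_rpow_neg_mul_le_lintegral_Ioi hγ.le hpos hmono hρ
  calc ∫⁻ ρ in Ioi (0:ℝ), ENNReal.ofReal ((ρ ^ (-γ) * h ρ) ^ τ / ρ)
      = ∫⁻ ρ in Ioi (0:ℝ), F ρ ^ τ * ENNReal.ofReal ρ⁻¹ :=
        setLIntegral_congr_fun measurableSet_Ioi fun ρ hρ => by
          rw [ofReal_div_eq_mul_inv (Real.rpow_nonneg (hF ρ hρ) _),
            ENNReal.ofReal_rpow_of_nonneg (hF ρ hρ) hτ0.le]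
    _ ≤ (C * I) ^ (τ - 1) * ∫⁻ ρ in Ioi (0:ℝ), F ρ * ENNReal.ofReal ρ⁻¹ :=
        lintegral_rpow_mul_le_of_ae_le (ENNReal.mul_ne_top ENNReal.ofReal_ne_top hI) hτ hFI
    _ = (C * I) ^ (τ - 1) * I := by
        rw [← setLIntegral_congr_fun measurableSet_Ioi fun ρ hρ => ofReal_div_eq_mul_inv (hF ρ hρ) ρ]
    _ ≤ C ^ τ * I ^ τ := mul_rpow_sub_one_mul_le hC hτ
    _ ≤ ENNReal.ofReal (2 ^ ((2*γ+1)*τ)) * I ^ τ := by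
        rw [ENNReal.ofReal_rpow_of_nonneg (by positivity) hτ0.le, ← Real.rpow_mul zero_le_two]
        gcongr
        exacts [one_le_two, by linarith]
end

section
/- Let $n > k \geq 0$, $p, r > 1$, $\lambda > 0$, and suppose $\beta \geq k - k/r$. Then the weighted HLS inequality fails: there is no constant $C > 0$ such that $\iint_{\mathbb{R}^n \times \mathbb{R}^{n-k}} \frac{f(x) g(y)}{|x-y|^{\lambda} |y''|^{\beta}} dx \, dy \leq C \|f\|_{L^p(\mathbb{R}^{n-k})} \|g\|_{L^r(\mathbb{R}^n)}$ holds for all non-negative $f \in L^p(\mathbb{R}^{n-k})$ and $g \in L^r(\mathbb{R}^n)$. More precisely, for $f = \chi_{B_1^{n-k}}$ the characteristic function of the unit ball in $\mathbb{R}^{n-k}$ and $q = r/(r-1)$, one has $\int_{\mathbb{R}^n} \Big( \int_{\mathbb{R}^{n-k}} \frac{f(x)}{|x-y|^{\lambda} |y''|^{\beta}} dx \Big)^q dy = +\infty$. -/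
/-!
For `y = (y', y'')` close to `y'' = 0` the inner integral `∫_{B₁} |x - y|^{-λ} |y''|^{-β} dx`
is comparable to `|y''|^{-β}`, and `β q ≥ k` makes `|y''|^{-β q}` non-integrable near `0` in
`ℝᵏ`: in polar coordinates it becomes `∫₀¹ t^{k - 1 - β q} dt = ∞`.

For the inequality, test against `f = χ_{B₁}` and `g_m(y) = |y''|^{β - k}` on
`B₁ × {1/(m+1) ≤ |y''| < 1}`. The left-hand side is then `≳ J_m`, the integral of `|y''|^{-k}`
over that set, while `‖g_m‖_r^r ≤ J_m` because `(β - k) r ≥ -k`. Hence `J_m ≲ J_m^{1/r}`, so the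
finite numbers `J_m` stay bounded, although they increase to `∫_{B₁ × B₁} |y''|^{-k} = ∞`.
-/

open MeasureTheory Set Metric
open scoped ENNReal

lemma lintegral_ball_norm_rpow_neg_eq_top {F : Type*} [NormedAddCommGroup F] [NormedSpace ℝ F]
    [FiniteDimensional ℝ F] [Nontrivial F] [MeasurableSpace F] [BorelSpace F]
    (ν : Measure F) [ν.IsAddHaarMeasure] {s : ℝ} (hs : (Module.finrank ℝ F : ℝ) ≤ s) :
    ∫⁻ z in ball (0 : F) 1, ENNReal.ofReal (‖z‖ ^ (-s)) ∂ν = ∞ := by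
  by_contra h
  have hint : IntegrableOn (fun z : F ↦ ‖z‖ ^ (-s)) (ball 0 1) ν :=
    (lintegral_ofReal_ne_top_iff_integrable
      ((continuous_norm.measurable.pow_const _).aestronglyMeasurable)
      (.of_forall fun z ↦ Real.rpow_nonneg (norm_nonneg z) _)).1 h
  rw [integrableOn_fun_norm_addHaar ν (f := fun t ↦ t ^ (-s))] at hint
  have hd : 1 ≤ Module.finrank ℝ F := Module.finrank_pos
  have hpolar : IntegrableOn (fun t : ℝ ↦ t ^ ((Module.finrank ℝ F : ℝ) - 1 - s)) (Ioo 0 1) := by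
    refine hint.congr_fun (fun t ht ↦ ?_) measurableSet_Ioo
    dsimp only
    rw [smul_eq_mul, ← Real.rpow_natCast, ← Real.rpow_add ht.1, Nat.cast_sub hd, Nat.cast_one,
      sub_eq_add_neg _ s]
  rw [intervalIntegral.integrableOn_Ioo_rpow_iff one_pos] at hpolar
  linarith

section Shell

variable (F : Type*) [NormedAddCommGroup F]

def shell (m : ℕ) : Set F := ball 0 1 \ ball 0 (m + 1 : ℝ)⁻¹

variable {F}

lemma measurableSet_shell [MeasurableSpace F] [OpensMeasurableSpace F] (m : ℕ) :
    MeasurableSet (shell F m) :=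
  measurableSet_ball.diff measurableSet_ball

lemma norm_mem_Ioc_of_mem_shell {m : ℕ} {z : F} (hz : z ∈ shell F m) : ‖z‖ ∈ Ioc 0 1 := by
  have h := hz.2
  rw [mem_ball_zero_iff, not_lt] at h
  exact ⟨lt_of_lt_of_le (by positivity) h, (mem_ball_zero_iff.1 hz.1).le⟩

lemma iUnion_shell : ⋃ m, shell F m = ball 0 1 \ {0} := by
  ext z
  simp only [shell, mem_iUnion, mem_sdiff, mem_ball_zero_iff, not_lt, mem_singleton_iff,
    ← norm_pos_iff, exists_and_left]
  refine and_congr_right fun _ ↦ ⟨fun ⟨m, hm⟩ ↦ lt_of_lt_of_le (by positivity) hm, fun hz ↦ ?_⟩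
  obtain ⟨m, hm⟩ := exists_nat_one_div_lt hz
  exact ⟨m, by rw [inv_eq_one_div]; exact hm.le⟩

lemma iSup_setLIntegral_shell [MeasurableSpace F] (ν : Measure F) [NullSingletonClass ν]
    (h : F → ℝ≥0∞) : ⨆ m, ∫⁻ z in shell F m, h z ∂ν = ∫⁻ z in ball 0 1, h z ∂ν := by
  have hmono : Monotone (shell F) := fun i j hij ↦
    sdiff_subset_sdiff_right <| ball_subset_ball <| by gcongr
  rw [← setLIntegral_iUnion_of_directed h hmono.directed_le, iUnion_shell,
    setLIntegral_congr (sdiff_null_ae_eq_self (measure_singleton 0))]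

lemma setLIntegral_shell_norm_rpow_neg_ne_top [MeasurableSpace F] [OpensMeasurableSpace F]
    (ν : Measure F) (hν : ν (ball 0 1) ≠ ∞) (m : ℕ) {s : ℝ} (hs : 0 ≤ s) :
    ∫⁻ z in shell F m, ENNReal.ofReal (‖z‖ ^ (-s)) ∂ν ≠ ∞ := by
  set ρ : ℝ := (m + 1 : ℝ)⁻¹
  refine ne_top_of_le_ne_top (ENNReal.mul_ne_top (ENNReal.ofReal_ne_top (r := ρ ^ (-s))) hν) ?_
  calc _ ≤ ∫⁻ _ in shell F m, ENNReal.ofReal (ρ ^ (-s)) ∂ν := by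
        refine setLIntegral_mono' (measurableSet_shell m) fun z hz ↦ ?_
        have hzρ : ρ ≤ ‖z‖ := by simpa using hz.2
        exact ENNReal.ofReal_le_ofReal
          (Real.rpow_le_rpow_of_nonpos (by positivity) hzρ (neg_nonpos.2 hs))
    _ ≤ _ := by rw [setLIntegral_const]; gcongr; exact sdiff_subset

end Shell

lemma setLIntegral_prod_comp_snd {E F : Type*} [MeasurableSpace E] [MeasurableSpace F]
    (μ : Measure E) (ν : Measure F) [SFinite μ] [SFinite ν] (s : Set E) (t : Set F)
    {h : F → ℝ≥0∞} (hh : Measurable h) :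
    ∫⁻ y in s ×ˢ t, h y.2 ∂μ.prod ν = μ s * ∫⁻ z in t, h z ∂ν := by
  rw [setLIntegral_prod (fun y ↦ h y.2) (hh.comp measurable_snd).aemeasurable, mul_comm]
  exact setLIntegral_const s (∫⁻ z in t, h z ∂ν)

lemma ENNReal.le_rpow_inv_of_mul_le_mul_rpow {a b K : ℝ≥0∞} {s : ℝ} (hs : s < 1) (ha : a ≠ ∞)
    (hb : b ≠ 0) (hb' : b ≠ ∞) (h : b * a ≤ K * a ^ s) : a ≤ (K / b) ^ (1 - s)⁻¹ := by
  rcases eq_or_ne a 0 with rfl | ha0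
  · exact zero_le
  have hsplit : a = a ^ (1 - s) * a ^ s := by
    rw [← ENNReal.rpow_add _ _ ha0 ha, sub_add_cancel, ENNReal.rpow_one]
  have hpos : 0 < 1 - s := sub_pos.2 hs
  have hpow : a ^ (1 - s) ≤ K / b := by
    rw [ENNReal.le_div_iff_mul_le (.inl hb) (.inl hb'), mul_comm]
    have h' : b * a ^ (1 - s) * a ^ s ≤ K * a ^ s := by rwa [mul_assoc, ← hsplit]
    exact (ENNReal.mul_le_mul_iff_left (by simp [ha0, ha]) (by simp [ha0, ha])).1 h'
  calc a = (a ^ (1 - s)) ^ (1 - s)⁻¹ := by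
        rw [← ENNReal.rpow_mul, mul_inv_cancel₀ hpos.ne', ENNReal.rpow_one]
    _ ≤ _ := ENNReal.rpow_le_rpow hpow (inv_nonneg.2 hpos.le)

/-- `hlsKernel lam β |x - y'| |y''|` is `|x - y|^{-λ} |y''|^{-β}` for `x ∈ ℝⁿ⁻ᵏ` and
`y = (y', y'') ∈ ℝⁿ⁻ᵏ × ℝᵏ`. -/
noncomputable def hlsKernel (lam β a t : ℝ) : ℝ := 1 / ((a ^ 2 + t ^ 2) ^ (lam / 2) * t ^ β)

lemma rpow_neg_le_hlsKernel {lam β a t : ℝ} (hlam : 0 ≤ lam) (ha0 : 0 ≤ a) (ha : a ≤ 2)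
    (ht0 : 0 < t) (ht : t ≤ 1) :
    5 ^ (-(lam / 2)) * t ^ (-β) ≤ hlsKernel lam β a t := by
  have hsum : 0 < a ^ 2 + t ^ 2 := by positivity
  have hsum5 : a ^ 2 + t ^ 2 ≤ 5 := by nlinarith
  rw [hlsKernel, Real.rpow_neg (by norm_num), Real.rpow_neg ht0.le, ← mul_inv, ← one_div]
  gcongr

lemma rpow_neg_le_hlsKernel_dist {E : Type*} [PseudoMetricSpace E] {c x y : E}
    (hx : x ∈ ball c 1) (hy : y ∈ ball c 1) {lam β t : ℝ} (hlam : 0 ≤ lam) (ht0 : 0 < t)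
    (ht : t ≤ 1) :
    5 ^ (-(lam / 2)) * t ^ (-β) ≤ hlsKernel lam β (dist x y) t :=
  rpow_neg_le_hlsKernel hlam dist_nonneg
    (by linarith [dist_triangle_right x y c, mem_ball.1 hx, mem_ball.1 hy]) ht0 ht

lemma ofReal_mul_measure_ball_le_lintegral_hlsKernel {E : Type*} [PseudoMetricSpace E]
    [MeasurableSpace E] [OpensMeasurableSpace E] (μ : Measure E) {c y : E} (hy : y ∈ ball c 1)
    {lam β t : ℝ} (hlam : 0 ≤ lam) (ht0 : 0 < t) (ht : t ≤ 1) :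
    ENNReal.ofReal (5 ^ (-(lam / 2)) * t ^ (-β)) * μ (ball c 1) ≤
      ∫⁻ x in ball c 1, ENNReal.ofReal (hlsKernel lam β (dist x y) t) ∂μ := by
  rw [← setLIntegral_const]
  exact setLIntegral_mono' measurableSet_ball fun x hx ↦
    ENNReal.ofReal_le_ofReal (rpow_neg_le_hlsKernel_dist hx hy hlam ht0 ht)

lemma eLpNorm_indicator_rpow_le {α : Type*} [MeasurableSpace α] (μ : Measure α) {S : Set α}
    (hS : MeasurableSet S) {φ : α → ℝ} (hφ : ∀ y ∈ S, φ y ∈ Ioc 0 1) {e s r : ℝ} (hr : 0 < r)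
    (hes : -s ≤ e * r) :
    eLpNorm (S.indicator fun y ↦ φ y ^ e) (ENNReal.ofReal r) μ ≤
      (∫⁻ y in S, ENNReal.ofReal (φ y ^ (-s)) ∂μ) ^ (1 / r) := by
  rw [eLpNorm_eq_lintegral_rpow_enorm_toReal (by simpa using hr) ENNReal.ofReal_ne_top,
    ENNReal.toReal_ofReal hr.le, ← lintegral_indicator hS]
  gcongr with y
  by_cases hy : y ∈ S
  · obtain ⟨ht0, ht1⟩ := hφ y hy
    rw [indicator_of_mem hy, indicator_of_mem hy, Real.enorm_eq_ofReal (by positivity),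
      ENNReal.ofReal_rpow_of_nonneg (by positivity) hr.le, ← Real.rpow_mul ht0.le]
    exact ENNReal.ofReal_le_ofReal (Real.rpow_le_rpow_of_exponent_ge ht0 ht1 hes)
  · simp [indicator_of_notMem hy, ENNReal.zero_rpow_of_pos hr]

lemma ofReal_mul_setLIntegral_le_lintegral_indicator_hlsKernel {E F : Type*} [PseudoMetricSpace E]
    [MeasurableSpace E] [OpensMeasurableSpace E] (μ : Measure E) [SFinite μ] (c : E)
    [NormedAddCommGroup F] [MeasurableSpace F] [OpensMeasurableSpace F] (ν : Measure F)
    [SFinite ν] (m : ℕ) {lam β s : ℝ} (hlam : 0 ≤ lam) :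
    ENNReal.ofReal (5 ^ (-(lam / 2))) * μ (ball c 1) *
        ∫⁻ y in ball c 1 ×ˢ shell F m, ENNReal.ofReal (‖y.2‖ ^ (-s)) ∂μ.prod ν ≤
      ∫⁻ y, ∫⁻ x, ENNReal.ofReal ((ball c 1).indicator 1 x *
        (ball c 1 ×ˢ shell F m).indicator (fun y ↦ ‖y.2‖ ^ (β - s)) y *
          hlsKernel lam β (dist x y.1) ‖y.2‖) ∂μ ∂μ.prod ν := by
  set a : ℝ := 5 ^ (-(lam / 2))
  have ha : 0 < a := by positivity
  have hinner (y : E × F) (hy : y ∈ ball c 1 ×ˢ shell F m) :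
      ENNReal.ofReal a * μ (ball c 1) * ENNReal.ofReal (‖y.2‖ ^ (-s)) ≤
        ∫⁻ x, ENNReal.ofReal ((ball c 1).indicator 1 x *
          (ball c 1 ×ˢ shell F m).indicator (fun y ↦ ‖y.2‖ ^ (β - s)) y *
            hlsKernel lam β (dist x y.1) ‖y.2‖) ∂μ := by
    obtain ⟨ht0, ht1⟩ := norm_mem_Ioc_of_mem_shell hy.2
    rw [mul_right_comm, ← ENNReal.ofReal_mul ha.le, ← setLIntegral_const]
    refine (setLIntegral_mono' measurableSet_ball fun x hx ↦ ENNReal.ofReal_le_ofReal ?_).trans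
      (setLIntegral_le_lintegral _ _)
    simp only [indicator_of_mem hx, indicator_of_mem hy, Pi.one_apply, one_mul]
    calc a * ‖y.2‖ ^ (-s) = ‖y.2‖ ^ (β - s) * (a * ‖y.2‖ ^ (-β)) := by
          rw [mul_left_comm, ← Real.rpow_add ht0]; ring_nf
      _ ≤ _ := by gcongr; exact rpow_neg_le_hlsKernel_dist hx hy.1 hlam ht0 ht1
  rw [← lintegral_const_mul _ (measurable_snd.norm.pow_const (-s)).ennreal_ofReal]
  exact (setLIntegral_mono' (measurableSet_ball.prod (measurableSet_shell m)) hinner).trans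
    (setLIntegral_le_lintegral _ _)

section Product

variable {E F : Type*} [PseudoMetricSpace E] [MeasurableSpace E] {μ : Measure E} [SFinite μ]
  {c : E} [NormedAddCommGroup F] [NormedSpace ℝ F] [FiniteDimensional ℝ F] [MeasurableSpace F]
  [BorelSpace F] {ν : Measure F} [ν.IsAddHaarMeasure]

lemma iSup_setLIntegral_ball_prod_shell_eq_top [Nontrivial F] (hμ : μ (ball c 1) ≠ 0) :
    ⨆ m, ∫⁻ y in ball c 1 ×ˢ shell F m,
      ENNReal.ofReal (‖y.2‖ ^ (-(Module.finrank ℝ F : ℝ))) ∂μ.prod ν = ∞ := by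
  have hprod (m : ℕ) := setLIntegral_prod_comp_snd μ ν (ball c 1) (shell F m)
    (continuous_norm.measurable.pow_const (-(Module.finrank ℝ F : ℝ))).ennreal_ofReal
  simp only [hprod, ← ENNReal.mul_iSup, iSup_setLIntegral_shell,
    lintegral_ball_norm_rpow_neg_eq_top ν le_rfl]
  exact ENNReal.mul_top hμ

lemma setLIntegral_ball_prod_shell_ne_top (hμ : μ (ball c 1) ≠ ∞) (m : ℕ) :
    ∫⁻ y in ball c 1 ×ˢ shell F m,
      ENNReal.ofReal (‖y.2‖ ^ (-(Module.finrank ℝ F : ℝ))) ∂μ.prod ν ≠ ∞ := by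
  rw [setLIntegral_prod_comp_snd μ ν _ _ (continuous_norm.measurable.pow_const _).ennreal_ofReal]
  exact ENNReal.mul_ne_top hμ (setLIntegral_shell_norm_rpow_neg_ne_top ν
    measure_ball_lt_top.ne m (Nat.cast_nonneg _))

variable [OpensMeasurableSpace E] [Nontrivial F]

theorem lintegral_rpow_lintegral_hlsKernel_eq_top (hμ : μ (ball c 1) ≠ 0) {lam β q : ℝ}
    (hlam : 0 ≤ lam) (hq : 0 < q) (hβq : (Module.finrank ℝ F : ℝ) ≤ β * q) :
    ∫⁻ y, (∫⁻ x in ball c 1, ENNReal.ofReal (hlsKernel lam β (dist x y.1) ‖y.2‖) ∂μ) ^ q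
      ∂μ.prod ν = ∞ := by
  set d : ℝ := (Module.finrank ℝ F : ℝ)
  set a : ℝ := 5 ^ (-(lam / 2))
  have ha : 0 < a := by positivity
  set A := ENNReal.ofReal (a ^ q) * μ (ball c 1) ^ q
  have hA : A ≠ 0 := mul_ne_zero (by simp [Real.rpow_pos_of_pos ha]) (by simp [hμ, hq.le])
  have hpt (m : ℕ) (y : E × F) (hy : y ∈ ball c 1 ×ˢ shell F m) :
      A * ENNReal.ofReal (‖y.2‖ ^ (-d)) ≤
        (∫⁻ x in ball c 1, ENNReal.ofReal (hlsKernel lam β (dist x y.1) ‖y.2‖) ∂μ) ^ q := by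
    obtain ⟨ht0, ht1⟩ := norm_mem_Ioc_of_mem_shell hy.2
    refine le_trans ?_ (ENNReal.rpow_le_rpow
      (ofReal_mul_measure_ball_le_lintegral_hlsKernel μ hy.1 hlam ht0 ht1) hq.le)
    rw [ENNReal.mul_rpow_of_nonneg _ _ hq.le, ENNReal.ofReal_rpow_of_nonneg (by positivity) hq.le,
      Real.mul_rpow ha.le (by positivity), ← Real.rpow_mul ht0.le, mul_right_comm,
      ← ENNReal.ofReal_mul (by positivity)]
    gcongr ENNReal.ofReal (_ * ?_) * _
    exact Real.rpow_le_rpow_of_exponent_ge ht0 ht1 (by linarith)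
  refine top_le_iff.1 ?_
  calc ∞ = A * ⨆ m, ∫⁻ y in ball c 1 ×ˢ shell F m, ENNReal.ofReal (‖y.2‖ ^ (-d)) ∂μ.prod ν := by
        rw [iSup_setLIntegral_ball_prod_shell_eq_top hμ, ENNReal.mul_top hA]
    _ = ⨆ m, ∫⁻ y in ball c 1 ×ˢ shell F m, A * ENNReal.ofReal (‖y.2‖ ^ (-d)) ∂μ.prod ν := by
        rw [ENNReal.mul_iSup]
        exact iSup_congr fun m ↦
          (lintegral_const_mul A (measurable_snd.norm.pow_const (-d)).ennreal_ofReal).symm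
    _ ≤ _ := iSup_le fun m ↦
        (setLIntegral_mono' (measurableSet_ball.prod (measurableSet_shell m)) (hpt m)).trans
          (setLIntegral_le_lintegral _ _)

theorem not_exists_lintegral_hlsKernel_le_mul_eLpNorm (hμ0 : μ (ball c 1) ≠ 0)
    (hμ : μ (ball c 1) ≠ ∞) (p : ℝ≥0∞) {lam β r : ℝ} (hlam : 0 ≤ lam) (hr : 1 < r)
    (hβ : (Module.finrank ℝ F : ℝ) - Module.finrank ℝ F / r ≤ β) :
    ¬ ∃ C : ℝ, 0 < C ∧ ∀ (f : E → ℝ) (g : E × F → ℝ),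
      Measurable f → Measurable g → (∀ x, 0 ≤ f x) → (∀ y, 0 ≤ g y) →
      ∫⁻ y, ∫⁻ x, ENNReal.ofReal (f x * g y * hlsKernel lam β (dist x y.1) ‖y.2‖) ∂μ ∂μ.prod ν
        ≤ ENNReal.ofReal C * eLpNorm f p μ * eLpNorm g (ENNReal.ofReal r) (μ.prod ν) := by
  rintro ⟨C, -, H⟩
  set d : ℝ := (Module.finrank ℝ F : ℝ)
  set S : ℕ → Set (E × F) := fun m ↦ ball c 1 ×ˢ shell F m
  have hS m : MeasurableSet (S m) := measurableSet_ball.prod (measurableSet_shell m)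
  set J : ℕ → ℝ≥0∞ := fun m ↦ ∫⁻ y in S m, ENNReal.ofReal (‖y.2‖ ^ (-d)) ∂μ.prod ν
  set f : E → ℝ := (ball c 1).indicator 1
  set g : ℕ → E × F → ℝ := fun m ↦ (S m).indicator fun y ↦ ‖y.2‖ ^ (β - d)
  set b := ENNReal.ofReal (5 ^ (-(lam / 2))) * μ (ball c 1)
  have hb0 : b ≠ 0 := by simp [b, hμ0, Real.rpow_pos_of_pos]
  have hbtop : b ≠ ∞ := ENNReal.mul_ne_top ENNReal.ofReal_ne_top hμ
  have hupper m : eLpNorm (g m) (ENNReal.ofReal r) (μ.prod ν) ≤ J m ^ (1 / r) := by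
    refine eLpNorm_indicator_rpow_le _ (hS m) (fun y hy ↦ norm_mem_Ioc_of_mem_shell hy.2)
      (by linarith) ?_
    have : d / r * r = d := div_mul_cancel₀ d (by linarith)
    nlinarith
  have hf : eLpNorm f p μ ≠ ∞ :=
    (memLp_indicator_const p measurableSet_ball 1 (.inr hμ)).eLpNorm_ne_top
  have hfg m := H f (g m) (measurable_one.indicator measurableSet_ball)
    ((measurable_snd.norm.pow_const _).indicator (hS m))
    (indicator_nonneg fun _ _ ↦ zero_le_one)
    (indicator_nonneg fun y _ ↦ Real.rpow_nonneg (norm_nonneg y.2) _)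
  have hbound m : J m ≤ (ENNReal.ofReal C * eLpNorm f p μ / b) ^ (1 - 1 / r)⁻¹ :=
    ENNReal.le_rpow_inv_of_mul_le_mul_rpow ((div_lt_one (by linarith)).2 hr)
      (setLIntegral_ball_prod_shell_ne_top hμ m) hb0 hbtop
      ((ofReal_mul_setLIntegral_le_lintegral_indicator_hlsKernel μ c ν m hlam).trans
        ((hfg m).trans (by gcongr; exact hupper m)))
  have hM : (ENNReal.ofReal C * eLpNorm f p μ / b) ^ (1 - 1 / r)⁻¹ ≠ ∞ :=
    ENNReal.rpow_ne_top_of_nonneg (inv_nonneg.2 (sub_nonneg.2 ((div_le_one (by linarith)).2 hr.le)))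
      (ENNReal.div_ne_top (ENNReal.mul_ne_top ENNReal.ofReal_ne_top hf) hb0)
  exact hM (top_le_iff.1 (iSup_setLIntegral_ball_prod_shell_eq_top (ν := ν) hμ0 ▸ iSup_le hbound))

end Product

theorem stmt_8_general (n k : ℕ) (hk : 1 ≤ k) (p r lam β q : ℝ)
    (hr : 1 < r) (hlam : 0 < lam)
    (hβ : (k : ℝ) - k / r ≤ β) (hq : q = r / (r - 1)) :
    (∫⁻ y : EuclideanSpace ℝ (Fin (n - k)) × EuclideanSpace ℝ (Fin k),
        (∫⁻ x in Metric.ball (0 : EuclideanSpace ℝ (Fin (n - k))) 1,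
          ENNReal.ofReal
            (1 / ((dist x y.1 ^ 2 + ‖y.2‖ ^ 2) ^ (lam / 2) * ‖y.2‖ ^ β))) ^ q) = ⊤ ∧
      ¬ ∃ C : ℝ, 0 < C ∧
        ∀ (f : EuclideanSpace ℝ (Fin (n - k)) → ℝ)
          (g : EuclideanSpace ℝ (Fin (n - k)) × EuclideanSpace ℝ (Fin k) → ℝ),
          Measurable f → Measurable g → (∀ x, 0 ≤ f x) → (∀ y, 0 ≤ g y) →
          ∫⁻ y : EuclideanSpace ℝ (Fin (n - k)) × EuclideanSpace ℝ (Fin k),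
              ∫⁻ x, ENNReal.ofReal
                (f x * g y / ((dist x y.1 ^ 2 + ‖y.2‖ ^ 2) ^ (lam / 2) * ‖y.2‖ ^ β))
            ≤ ENNReal.ofReal C * eLpNorm f (ENNReal.ofReal p) volume *
                eLpNorm g (ENNReal.ofReal r) volume := by
  have : Nontrivial (EuclideanSpace ℝ (Fin k)) :=
    Module.nontrivial_of_finrank_pos (R := ℝ) (by simp; omega)
  have hdim : (Module.finrank ℝ (EuclideanSpace ℝ (Fin k)) : ℝ) = k := by simp
  have hball : volume (ball (0 : EuclideanSpace ℝ (Fin (n - k))) 1) ≠ 0 :=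
    (measure_ball_pos _ _ one_pos).ne'
  have hr1 : 0 < r - 1 := by linarith
  have hβq : (k : ℝ) ≤ β * q := by
    calc (k : ℝ) = (k - k / r) * q := by rw [hq]; field_simp
      _ ≤ β * q := by gcongr; rw [hq]; positivity
  refine ⟨lintegral_rpow_lintegral_hlsKernel_eq_top hball hlam.le (by rw [hq]; positivity)
    (hdim ▸ hβq), ?_⟩
  have h2 := not_exists_lintegral_hlsKernel_le_mul_eLpNorm (ν := volume) hball
    measure_ball_lt_top.ne (ENNReal.ofReal p) hlam.le hr (hdim ▸ hβ)
  simp only [hlsKernel, mul_one_div] at h2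
  exact h2

theorem stmt_8 (n k : ℕ) (hk : 1 ≤ k) (hkn : k < n) (p r lam β q : ℝ)
    (hp : 1 < p) (hr : 1 < r) (hlam : 0 < lam)
    (hβ : (k : ℝ) - k / r ≤ β) (hq : q = r / (r - 1)) :
    (∫⁻ y : EuclideanSpace ℝ (Fin (n - k)) × EuclideanSpace ℝ (Fin k),
        (∫⁻ x in Metric.ball (0 : EuclideanSpace ℝ (Fin (n - k))) 1,
          ENNReal.ofReal
            (1 / ((dist x y.1 ^ 2 + ‖y.2‖ ^ 2) ^ (lam / 2) * ‖y.2‖ ^ β))) ^ q) = ⊤ ∧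
      ¬ ∃ C : ℝ, 0 < C ∧
        ∀ (f : EuclideanSpace ℝ (Fin (n - k)) → ℝ)
          (g : EuclideanSpace ℝ (Fin (n - k)) × EuclideanSpace ℝ (Fin k) → ℝ),
          Measurable f → Measurable g → (∀ x, 0 ≤ f x) → (∀ y, 0 ≤ g y) →
          ∫⁻ y : EuclideanSpace ℝ (Fin (n - k)) × EuclideanSpace ℝ (Fin k),
              ∫⁻ x, ENNReal.ofReal
                (f x * g y / ((dist x y.1 ^ 2 + ‖y.2‖ ^ 2) ^ (lam / 2) * ‖y.2‖ ^ β))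
            ≤ ENNReal.ofReal C * eLpNorm f (ENNReal.ofReal p) volume *
                eLpNorm g (ENNReal.ofReal r) volume :=
  stmt_8_general n k hk p r lam β q hr hlam hβ hq
end
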